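/- arXiv:1704.08128 — 3 statements merged into one kernel-verified Lean document; each statement's English description precedes it below -/
import Mathlib

section
/- Let V be a finite-dimensional real normed vector space, let G : ℝ → V be C^∞ on a neighborhood of 0, and let j ∈ ℕ. Then ∫₀¹ P̂_j(c)·G(ch) dc = O(h^j) as h → 0⁺; that is, there exist constants C > 0 and h₀ > 0 such that ‖∫₀¹ P̂_j(c)·G(ch) dc‖ ≤ C·h^j for all h ∈ (0, h₀]. -/
open MeasureTheory Matrix Set

noncomputable def grad {m : ℕ} (f : (Fin m → ℝ) → ℝ) (q : Fin m → ℝ) : Fin m → ℝ :=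
  fun i => fderiv ℝ f q (Pi.single i 1)

noncomputable def gradMat {m ν : ℕ} (g : (Fin m → ℝ) → (Fin ν → ℝ)) (q : Fin m → ℝ) :
    Matrix (Fin m) (Fin ν) ℝ :=
  Matrix.of fun i a => fderiv ℝ (fun x => g x a) q (Pi.single i 1)

noncomputable def hessVec {m ν : ℕ} (g : (Fin m → ℝ) → (Fin ν → ℝ)) (q v w : Fin m → ℝ) :
    Fin ν → ℝ :=
  fun a => fderiv ℝ (fun x => fderiv ℝ (fun y => g y a) x w) q v

noncomputable def lagMult {m ν : ℕ} (M : Matrix (Fin m) (Fin m) ℝ)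
    (U : (Fin m → ℝ) → ℝ) (g : (Fin m → ℝ) → (Fin ν → ℝ)) (q p : Fin m → ℝ) : Fin ν → ℝ :=
  ((gradMat g q)ᵀ * M⁻¹ * gradMat g q)⁻¹ *ᵥ
    (hessVec g q (M⁻¹ *ᵥ p) (M⁻¹ *ᵥ p) - (gradMat g q)ᵀ *ᵥ (M⁻¹ *ᵥ grad U q))

noncomputable def Ham {m : ℕ} (M : Matrix (Fin m) (Fin m) ℝ)
    (U : (Fin m → ℝ) → ℝ) (q p : Fin m → ℝ) : ℝ :=
  (1 / 2) * (p ⬝ᵥ (M⁻¹ *ᵥ p)) + U q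

noncomputable def HamHat {m ν : ℕ} (M : Matrix (Fin m) (Fin m) ℝ)
    (U : (Fin m → ℝ) → ℝ) (g : (Fin m → ℝ) → (Fin ν → ℝ))
    (q p : Fin m → ℝ) (lam : Fin ν → ℝ) : ℝ :=
  Ham M U q p + lam ⬝ᵥ g q

noncomputable def shiftedLegendre (j : ℕ) (x : ℝ) : ℝ :=
  (Real.sqrt (2 * j + 1) / (Nat.factorial j)) * iteratedDeriv j (fun y => (y ^ 2 - y) ^ j) x

section Aux
open Polynomial

lemma iteratedDeriv_polyEval (p : Polynomial ℝ) (n : ℕ) :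
    iteratedDeriv n (fun y => eval y p) = fun y => eval y ((⇑derivative)^[n] p) := by
  induction n with
  | zero => simp
  | succ n ih =>
    rw [iteratedDeriv_succ, ih]
    funext y
    rw [Function.iterate_succ_apply', Polynomial.deriv]

lemma shiftedLegendre_eq (j : ℕ) (x : ℝ) :
    shiftedLegendre j x =
      (Real.sqrt (2 * j + 1) / (Nat.factorial j)) *
        eval x ((⇑derivative)^[j] ((X ^ 2 - X : Polynomial ℝ) ^ j)) := by
  have h : (fun y : ℝ => (y ^ 2 - y) ^ j) = fun y => eval y ((X ^ 2 - X : Polynomial ℝ) ^ j) := by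
    funext y; simp
  rw [_root_.shiftedLegendre, h, iteratedDeriv_polyEval]

lemma shiftedLegendre_continuous (j : ℕ) : Continuous (shiftedLegendre j) := by
  have : _root_.shiftedLegendre j = fun x =>
      (Real.sqrt (2 * j + 1) / (Nat.factorial j)) *
        eval x ((⇑derivative)^[j] ((X ^ 2 - X : Polynomial ℝ) ^ j)) := by
    funext x; exact shiftedLegendre_eq j x
  rw [this]
  exact continuous_const.mul (Polynomial.continuous _)

lemma root_iter_deriv {j i : ℕ} (hi : i < j) {t : ℝ} (ht : t = 0 ∨ t = 1) :
    eval t ((⇑derivative)^[i] ((X ^ 2 - X : Polynomial ℝ) ^ j)) = 0 := by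
  have hne : ((X ^ 2 - X : Polynomial ℝ) ^ j) ≠ 0 := by
    apply pow_ne_zero
    intro h
    have := congrArg (eval 2) h
    norm_num at this
  apply Polynomial.isRoot_iterate_derivative_of_lt_rootMultiplicity
  apply lt_of_lt_of_le hi
  rw [Polynomial.le_rootMultiplicity_iff hne]
  apply pow_dvd_pow_of_dvd
  rcases ht with rfl | rfl
  · exact ⟨X - 1, by rw [Polynomial.C_0]; ring⟩
  · exact ⟨X, by rw [Polynomial.C_1]; ring⟩

lemma ipp_zero {j : ℕ} :
    ∀ n ≤ j, ∀ q : Polynomial ℝ, q.natDegree < n →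
      ∫ x in (0:ℝ)..1, eval x ((⇑derivative)^[n] ((X ^ 2 - X : Polynomial ℝ) ^ j)) * eval x q
        = 0 := by
  intro n
  induction n with
  | zero => intro _ q hq; omega
  | succ n ih =>
    intro hn q hq
    set p : Polynomial ℝ := (X ^ 2 - X : Polynomial ℝ) ^ j with hp
    have hu : ∀ x ∈ Set.uIcc (0:ℝ) 1, HasDerivAt (fun y => eval y q)
        (eval x (derivative q)) x := fun x _ => Polynomial.hasDerivAt q x
    have hv : ∀ x ∈ Set.uIcc (0:ℝ) 1, HasDerivAt (fun y => eval y ((⇑derivative)^[n] p))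
        (eval x ((⇑derivative)^[n+1] p)) x := by
      intro x _
      rw [Function.iterate_succ_apply']
      exact Polynomial.hasDerivAt _ x
    have hint1 : IntervalIntegrable (fun x => eval x (derivative q)) volume 0 1 :=
      (Polynomial.continuous _).intervalIntegrable _ _
    have hint2 : IntervalIntegrable (fun x => eval x ((⇑derivative)^[n+1] p)) volume 0 1 :=
      (Polynomial.continuous _).intervalIntegrable _ _
    have key := intervalIntegral.integral_mul_deriv_eq_deriv_mul hu hv hint1 hint2
    have hb0 : eval (0:ℝ) ((⇑derivative)^[n] p) = 0 := root_iter_deriv (by omega) (Or.inl rfl)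
    have hb1 : eval (1:ℝ) ((⇑derivative)^[n] p) = 0 := root_iter_deriv (by omega) (Or.inr rfl)
    rw [hb0, hb1, mul_zero, mul_zero, sub_zero, zero_sub] at key
    have hcomm : (∫ x in (0:ℝ)..1, eval x ((⇑derivative)^[n+1] p) * eval x q)
        = ∫ x in (0:ℝ)..1, eval x q * eval x ((⇑derivative)^[n+1] p) := by
      simp_rw [mul_comm]
    rw [hcomm, key]
    rcases Nat.eq_zero_or_pos q.natDegree with h0 | hpos
    · obtain ⟨a, ha⟩ := Polynomial.natDegree_eq_zero.mp h0
      rw [← ha]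
      simp
    · have hdlt : (derivative q).natDegree < n := by
        have := Polynomial.natDegree_derivative_lt (p := q) (by omega)
        omega
      have := ih (by omega) (derivative q) hdlt
      have hc : (∫ x in (0:ℝ)..1, eval x (derivative q) * eval x ((⇑derivative)^[n] p))
          = ∫ x in (0:ℝ)..1, eval x ((⇑derivative)^[n] p) * eval x (derivative q) := by
        simp_rw [mul_comm]
      rw [hc, this, neg_zero]

lemma legendre_orth {j k : ℕ} (hk : k < j) :
    ∫ c in (0:ℝ)..1, shiftedLegendre j c * c ^ k = 0 := by
  have h : ∀ c : ℝ, shiftedLegendre j c * c ^ k =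
      (Real.sqrt (2 * j + 1) / (Nat.factorial j)) *
        (eval c ((⇑derivative)^[j] ((X ^ 2 - X : Polynomial ℝ) ^ j)) * eval c (X ^ k)) := by
    intro c
    rw [shiftedLegendre_eq]
    simp [mul_assoc]
  simp_rw [h]
  rw [intervalIntegral.integral_const_mul,
    ipp_zero j le_rfl (X ^ k) (by simpa using hk), mul_zero]

end Aux

open Polynomial in
theorem stmt3 {V : Type*} [NormedAddCommGroup V] [NormedSpace ℝ V] [FiniteDimensional ℝ V]
    (G : ℝ → V) (s : Set ℝ) (hs : s ∈ nhds (0:ℝ)) (hG : ContDiffOn ℝ (⊤ : ℕ∞) G s) (j : ℕ) :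
    ∃ C > 0, ∃ h₀ > 0, ∀ h ∈ Set.Ioc (0:ℝ) h₀,
      ‖∫ c in (0:ℝ)..1, shiftedLegendre j c • G (c * h)‖ ≤ C * h ^ j := by
  obtain ⟨δ, hδpos, hδsub⟩ : ∃ δ > 0, Icc (0:ℝ) δ ⊆ s := by
    rcases Metric.mem_nhds_iff.mp hs with ⟨ε, hε, hball⟩
    refine ⟨ε/2, by positivity, fun x hx => hball ?_⟩
    rw [Metric.mem_ball, Real.dist_eq, sub_zero]
    rcases hx with ⟨h1, h2⟩
    rw [abs_of_nonneg h1]; linarith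
  have hGI : ContinuousOn G (Icc 0 δ) := (hG.mono hδsub).continuousOn
  obtain ⟨Mp, hMp⟩ := (isCompact_Icc (a := (0:ℝ)) (b := 1)).exists_bound_of_continuousOn
    (shiftedLegendre_continuous j).continuousOn
  have hMp0 : ∀ c ∈ Icc (0:ℝ) 1, |shiftedLegendre j c| ≤ max Mp 0 := fun c hc =>
    le_trans (hMp c hc) (le_max_left _ _)
  have hmem : ∀ h ∈ Ioc (0:ℝ) δ, ∀ c ∈ Icc (0:ℝ) 1, c * h ∈ Icc (0:ℝ) δ := by
    intro h hh c hc
    constructor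
    · exact mul_nonneg hc.1 hh.1.le
    · calc c * h ≤ 1 * h := mul_le_mul_of_nonneg_right hc.2 hh.1.le
        _ = h := one_mul h
        _ ≤ δ := hh.2
  rcases j with _ | m
  · obtain ⟨K, hK⟩ := (isCompact_Icc (a := (0:ℝ)) (b := δ)).exists_bound_of_continuousOn hGI
    refine ⟨(max Mp 0 + 1) * (max K 0 + 1), by positivity, δ, hδpos, fun h hh => ?_⟩
    rw [pow_zero, mul_one]
    have hle := intervalIntegral.norm_integral_le_of_norm_le_const
      (a := 0) (b := 1) (C := (max Mp 0 + 1) * (max K 0 + 1))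
      (f := fun c => shiftedLegendre 0 c • G (c * h)) ?_
    · simpa using hle
    · intro c hc
      rw [Set.uIoc_of_le zero_le_one] at hc
      have hc' : c ∈ Icc (0:ℝ) 1 := ⟨hc.1.le, hc.2⟩
      rw [norm_smul, Real.norm_eq_abs]
      have h1 : |shiftedLegendre 0 c| ≤ max Mp 0 + 1 := le_trans (hMp0 c hc') (by linarith)
      have h2 : ‖G (c * h)‖ ≤ max K 0 + 1 := by
        have hKK := hK (c*h) (hmem h hh c hc')
        have := le_max_left K 0
        linarith
      exact mul_le_mul h1 h2 (norm_nonneg _) (by positivity)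
  · set I := Icc (0:ℝ) δ with hI
    have hGm : ContDiffOn ℝ ((m:ℕ∞) + 1) G I := (hG.mono hδsub).of_le (by exact_mod_cast le_top)
    obtain ⟨C, hC⟩ := exists_taylor_mean_remainder_bound hδpos.le hGm
    set C₀ := max C 0 with hC₀
    have hCbound : ∀ x ∈ I, ‖G x - taylorWithinEval G m I 0 x‖ ≤ C₀ * x ^ (m+1) := by
      intro x hx
      calc ‖G x - taylorWithinEval G m I 0 x‖ ≤ C * (x - 0) ^ (m+1) := hC x hx
        _ = C * x ^ (m+1) := by rw [sub_zero]
        _ ≤ C₀ * x ^ (m+1) :=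
            mul_le_mul_of_nonneg_right (le_max_left _ _) (pow_nonneg hx.1 _)
    set Mp' := max Mp 0 + 1 with hMp'
    refine ⟨Mp' * C₀ + 1, by positivity, δ, hδpos, fun h hh => ?_⟩
    set P := _root_.shiftedLegendre (m+1) with hP
    set T : ℝ → V := fun x => taylorWithinEval G m I 0 x with hT
    have hTc : Continuous T := by
      have hTeq : T = fun x => ∑ k ∈ Finset.range (m+1),
          (((k.factorial : ℝ))⁻¹ * x ^ k) • iteratedDerivWithin k G I 0 := by
        funext x; simp only [hT, taylor_within_apply]; simp
      rw [hTeq]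
      apply continuous_finset_sum
      intro k _
      exact (continuous_const.mul (continuous_pow k)).smul continuous_const
    have hint_T : (∫ c in (0:ℝ)..1, P c • T (c * h)) = 0 := by
      have heq : ∀ c : ℝ, P c • T (c * h) = ∑ k ∈ Finset.range (m+1),
          (P c * (((k.factorial : ℝ))⁻¹ * (c * h) ^ k)) • iteratedDerivWithin k G I 0 := by
        intro c
        simp only [hT, taylor_within_apply]; rw [Finset.smul_sum]
        congr 1 with k
        rw [smul_smul]
        simp
      simp_rw [heq]
      rw [intervalIntegral.integral_finset_sum]
      · apply Finset.sum_eq_zero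
        intro k hk
        rw [intervalIntegral.integral_smul_const]
        have hz : (∫ c in (0:ℝ)..1, P c * ((k.factorial : ℝ)⁻¹ * (c * h) ^ k)) = 0 := by
          have heq2 : ∀ c : ℝ, P c * ((k.factorial : ℝ)⁻¹ * (c * h) ^ k)
              = ((k.factorial : ℝ)⁻¹ * h ^ k) * (P c * c ^ k) := by
            intro c; rw [mul_pow]; ring
          simp_rw [heq2]
          rw [intervalIntegral.integral_const_mul, hP,
            legendre_orth (Finset.mem_range.mp hk), mul_zero]
        rw [hz, zero_smul]
      · intro k _
        apply Continuous.intervalIntegrable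
        exact ((shiftedLegendre_continuous (m+1)).mul
          (continuous_const.mul ((continuous_mul_right h).pow k))).smul continuous_const
    have hchc : Continuous fun c : ℝ => c * h := continuous_mul_right h
    have hGch : ContinuousOn (fun c => G (c * h)) (Icc (0:ℝ) 1) := by
      apply hGI.comp hchc.continuousOn
      intro c hc; exact hmem h hh c hc
    have hint1 : IntervalIntegrable (fun c => P c • (G (c*h) - T (c*h))) volume 0 1 := by
      apply ContinuousOn.intervalIntegrable
      rw [Set.uIcc_of_le zero_le_one]
      exact ((shiftedLegendre_continuous (m+1)).continuousOn).smul
        (hGch.sub (hTc.comp hchc).continuousOn)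
    have hint2 : IntervalIntegrable (fun c => P c • T (c*h)) volume 0 1 :=
      (((shiftedLegendre_continuous (m+1)).smul (hTc.comp hchc)).intervalIntegrable _ _)
    have hsplit : (∫ c in (0:ℝ)..1, P c • G (c * h))
        = ∫ c in (0:ℝ)..1, P c • (G (c*h) - T (c*h)) := by
      have hp : ∀ c : ℝ, P c • G (c*h) = P c • (G (c*h) - T (c*h)) + P c • T (c*h) := by
        intro c; rw [← smul_add, sub_add_cancel]
      simp_rw [hp]
      rw [intervalIntegral.integral_add hint1 hint2, hint_T, add_zero]
    rw [hsplit]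
    have hb := intervalIntegral.norm_integral_le_of_norm_le_const (a := 0) (b := 1)
      (C := Mp' * (C₀ * h ^ (m+1))) (f := fun c => P c • (G (c*h) - T (c*h))) ?_
    · refine le_trans hb ?_
      have hpw : (0:ℝ) ≤ h^(m+1) := pow_nonneg hh.1.le _
      have : |(1:ℝ) - 0| = 1 := by norm_num
      rw [this, mul_one]
      nlinarith
    · intro c hc
      rw [Set.uIoc_of_le zero_le_one] at hc
      have hc' : c ∈ Icc (0:ℝ) 1 := ⟨hc.1.le, hc.2⟩
      rw [norm_smul, Real.norm_eq_abs]
      have h1 : |P c| ≤ Mp' := le_trans (hMp0 c hc') (by rw [hMp']; linarith)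
      have h2 : ‖G (c*h) - T (c*h)‖ ≤ C₀ * h^(m+1) := by
        have hm1 := hmem h hh c hc'
        calc ‖G (c*h) - T (c*h)‖ ≤ C₀ * (c*h)^(m+1) := hCbound _ hm1
          _ ≤ C₀ * h^(m+1) := by
            apply mul_le_mul_of_nonneg_left _ (le_max_right C 0)
            apply pow_le_pow_left₀ (mul_nonneg hc'.1 hh.1.le)
            calc c * h ≤ 1 * h := mul_le_mul_of_nonneg_right hc'.2 hh.1.le
              _ = h := one_mul h
      exact mul_le_mul h1 h2 (norm_nonneg _) (by rw [hMp']; positivity)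
end

section
/- Define ξ_j := 1/(2√|4j²−1|) for j ∈ ℕ (so ξ₀ = 1/2). For all i, j ∈ ℕ, the integral ∫₀¹ P̂_j(c)·(∫₀^c P̂_i(x) dx) dc equals: ξ₀ if i = j = 0; ξ_j if j = i + 1; −ξ_{j+1} if i = j + 1; and 0 in all other cases (in particular it vanishes when i = j ≥ 1 and when |i − j| ≥ 2). -/
open MeasureTheory Matrix Set

noncomputable def xi (j : ℕ) : ℝ := 1 / (2 * Real.sqrt |4 * (j : ℝ) ^ 2 - 1|)

/-!
Write `P̂ₙ = sₙ Dⁿ Wₙ` with `Wₙ = (X² - X)ⁿ`. The derivatives of `Wₙ` of order `< n` vanish at `0`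
and `1`, so `n` integrations by parts give `∫₀¹ p P̂ₙ = (-1)ⁿ sₙ ∫₀¹ p⁽ⁿ⁾ Wₙ`; in particular `P̂ₙ`
is orthogonal to all polynomials of degree `< n`. The inner integral `Qᵢ(c) = ∫₀ᶜ P̂ᵢ` is `X` for
`i = 0` and `sᵢ Dⁱ⁻¹ Wᵢ` otherwise: a polynomial of degree `i + 1` vanishing at `0`, and also at `1`
when `i ≥ 1`. Hence `∫₀¹ Qᵢ P̂ⱼ` vanishes for `j ≥ i + 2`, one integration by parts makes it
antisymmetric in `(i, j)` as soon as `i ≥ 1` (which settles `i ≥ j + 1` and the diagonal), and for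
`j = i + 1` it is the constant `Dⁱ⁺¹ Qᵢ` times the Beta integral `∫₀¹ Wᵢ₊₁`.
-/

open Polynomial hiding shiftedLegendre
open intervalIntegral Nat

theorem Polynomial.iteratedDeriv_eval {𝕜 : Type*} [NontriviallyNormedField 𝕜] (p : 𝕜[X])
    (n : ℕ) : iteratedDeriv n (fun x => p.eval x) = fun x => (derivative^[n] p).eval x := by
  induction n with
  | zero => simp
  | succ n ih =>
    rw [iteratedDeriv_succ, ih, Function.iterate_succ_apply']
    ext x
    exact Polynomial.deriv _

section IntegrationByParts

variable {a b : ℝ}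

theorem integral_eval_mul_eval_derivative (p q : ℝ[X]) :
    ∫ x in a..b, p.eval x * (derivative q).eval x =
      p.eval b * q.eval b - p.eval a * q.eval a -
        ∫ x in a..b, (derivative p).eval x * q.eval x :=
  integral_mul_deriv_eq_deriv_mul (fun x _ => p.hasDerivAt x) (fun x _ => q.hasDerivAt x)
    ((derivative p).continuous.intervalIntegrable a b)
    ((derivative q).continuous.intervalIntegrable a b)

theorem integral_eval_mul_eval_iterate_derivative {p q : ℝ[X]} {n : ℕ}
    (ha : ∀ k < n, (derivative^[k] q).eval a = 0) (hb : ∀ k < n, (derivative^[k] q).eval b = 0) :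
    ∫ x in a..b, p.eval x * (derivative^[n] q).eval x =
      (-1) ^ n * ∫ x in a..b, (derivative^[n] p).eval x * q.eval x := by
  induction n generalizing q with
  | zero => simp
  | succ n ih =>
    have hqa : q.eval a = 0 := ha 0 n.succ_pos
    have hqb : q.eval b = 0 := hb 0 n.succ_pos
    rw [Function.iterate_succ_apply, ih (fun k hk => ha (k + 1) (by omega))
      (fun k hk => hb (k + 1) (by omega)), integral_eval_mul_eval_derivative, hqa, hqb,
      Function.iterate_succ_apply']
    ring

end IntegrationByParts

theorem integral_pow_mul_one_sub_pow (m n : ℕ) :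
    ∫ x in (0 : ℝ)..1, x ^ m * (1 - x) ^ n = (m ! * n ! : ℝ) / (m + n + 1)! := by
  induction n generalizing m with
  | zero =>
    simp only [pow_zero, mul_one, integral_pow, one_pow, zero_pow m.succ_ne_zero, sub_zero,
      factorial_zero, add_zero, factorial_succ]
    push_cast
    field_simp
  | succ n ih =>
    have hparts : (m + 1 : ℝ) * ∫ x in (0 : ℝ)..1, x ^ m * (1 - x) ^ (n + 1) =
        (n + 1) * ∫ x in (0 : ℝ)..1, x ^ (m + 1) * (1 - x) ^ n := by
      have h := integral_eval_mul_eval_derivative (a := 0) (b := 1) ((1 - X) ^ (n + 1)) (X ^ (m + 1))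
      simp only [derivative_pow, derivative_sub, derivative_one, derivative_X, eval_mul, eval_pow,
        eval_sub, eval_one, eval_neg, eval_X, eval_C, sub_self, zero_pow n.succ_ne_zero,
        zero_pow m.succ_ne_zero, mul_zero, zero_mul, zero_sub, ← intervalIntegral.integral_neg] at h
      rw [← intervalIntegral.integral_const_mul, ← intervalIntegral.integral_const_mul]
      refine (integral_congr fun x _ => ?_).trans (h.trans (integral_congr fun x _ => ?_)) <;>
        simp only [Nat.add_sub_cancel] <;> push_cast <;> ring
    rw [ih, add_right_comm m 1 n] at hparts
    rw [eq_div_iff (by positivity), ← mul_right_inj' (by positivity : (m + 1 : ℝ) ≠ 0),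
      ← mul_assoc, hparts, ← add_assoc m n 1, factorial_succ m, factorial_succ n]
    push_cast
    field_simp

noncomputable def rodrigues (n : ℕ) : ℝ[X] := (X ^ 2 - X) ^ n

theorem rodrigues_eq_mul (n : ℕ) : rodrigues n = (X - C 0) ^ n * (X - C 1) ^ n := by
  rw [rodrigues, ← mul_pow]
  simp only [map_zero, map_one, sub_zero]
  ring

theorem rodrigues_monic (n : ℕ) : (rodrigues n).Monic := by
  rw [rodrigues_eq_mul]
  exact ((monic_X_sub_C 0).pow n).mul ((monic_X_sub_C 1).pow n)

theorem natDegree_rodrigues (n : ℕ) : (rodrigues n).natDegree = 2 * n := by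
  rw [rodrigues_eq_mul, (((monic_X_sub_C 0).pow n)).natDegree_mul ((monic_X_sub_C 1).pow n),
    natDegree_pow, natDegree_pow, natDegree_X_sub_C, natDegree_X_sub_C]
  ring

theorem eval_iterate_derivative_rodrigues {k n : ℕ} (hk : k < n) {t : ℝ} (ht : t = 0 ∨ t = 1) :
    (derivative^[k] (rodrigues n)).eval t = 0 := by
  refine isRoot_iterate_derivative_of_lt_rootMultiplicity (hk.trans_le ?_)
  rw [le_rootMultiplicity_iff (rodrigues_monic n).ne_zero, rodrigues_eq_mul]
  rcases ht with rfl | rfl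
  · exact dvd_mul_right _ _
  · exact dvd_mul_left _ _

theorem iterate_derivative_two_mul_rodrigues (n : ℕ) :
    derivative^[2 * n] (rodrigues n) = C ((2 * n)! : ℝ) := by
  have hdeg : (derivative^[2 * n] (rodrigues n)).natDegree ≤ 0 := by
    simpa [natDegree_rodrigues] using natDegree_iterate_derivative (rodrigues n) (2 * n)
  rw [eq_C_of_natDegree_le_zero hdeg, coeff_iterate_derivative, zero_add,
    Nat.descFactorial_self, ← natDegree_rodrigues, (rodrigues_monic n).coeff_natDegree,
    nsmul_eq_mul, mul_one]

theorem integral_rodrigues (n : ℕ) :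
    ∫ x in (0 : ℝ)..1, (rodrigues n).eval x = (-1) ^ n * (n ! * n ! : ℝ) / (2 * n + 1)! := by
  have h : ∀ x : ℝ, (rodrigues n).eval x = (-1) ^ n * (x ^ n * (1 - x) ^ n) := fun x => by
    simp only [rodrigues, eval_pow, eval_sub, eval_X]
    rw [← mul_pow, ← mul_pow]
    ring
  simp only [h, intervalIntegral.integral_const_mul, integral_pow_mul_one_sub_pow, two_mul]
  ring

noncomputable def legendreScale (n : ℕ) : ℝ := √(2 * n + 1) / n !

noncomputable def legendre (n : ℕ) : ℝ[X] := C (legendreScale n) * derivative^[n] (rodrigues n)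

theorem eval_legendre (n : ℕ) (x : ℝ) : (legendre n).eval x = shiftedLegendre n x := by
  have h : (fun y : ℝ => (y ^ 2 - y) ^ n) = fun y => (rodrigues n).eval y := by
    ext y; simp [rodrigues]
  rw [shiftedLegendre, h, iteratedDeriv_eval, legendre, eval_mul, eval_C, legendreScale]

theorem integral_eval_mul_eval_legendre (p : ℝ[X]) (n : ℕ) :
    ∫ x in (0 : ℝ)..1, p.eval x * (legendre n).eval x =
      (-1) ^ n * legendreScale n *
        ∫ x in (0 : ℝ)..1, (derivative^[n] p).eval x * (rodrigues n).eval x := by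
  simp only [legendre, eval_mul, eval_C, mul_left_comm _ (legendreScale n),
    intervalIntegral.integral_const_mul]
  rw [integral_eval_mul_eval_iterate_derivative
    (fun k hk => eval_iterate_derivative_rodrigues hk (.inl rfl))
    (fun k hk => eval_iterate_derivative_rodrigues hk (.inr rfl))]
  ring

theorem integral_eval_mul_eval_legendre_of_natDegree_lt {p : ℝ[X]} {n : ℕ}
    (hp : p.natDegree < n) : ∫ x in (0 : ℝ)..1, p.eval x * (legendre n).eval x = 0 := by
  simp [integral_eval_mul_eval_legendre, iterate_derivative_eq_zero hp]

noncomputable def legendreAntideriv : ℕ → ℝ[X]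
  | 0 => X
  | n + 1 => C (legendreScale (n + 1)) * derivative^[n] (rodrigues (n + 1))

theorem derivative_legendreAntideriv (n : ℕ) : derivative (legendreAntideriv n) = legendre n := by
  cases n with
  | zero => simp [legendreAntideriv, legendre, legendreScale, rodrigues]
  | succ n =>
    rw [legendreAntideriv, legendre, derivative_C_mul, ← Function.iterate_succ_apply' derivative]

theorem eval_legendreAntideriv_zero (n : ℕ) : (legendreAntideriv n).eval 0 = 0 := by
  cases n with
  | zero => simp [legendreAntideriv]
  | succ n =>
    rw [legendreAntideriv, eval_mul, eval_iterate_derivative_rodrigues n.lt_succ_self (.inl rfl),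
      mul_zero]

theorem eval_legendreAntideriv_one {n : ℕ} (hn : n ≠ 0) : (legendreAntideriv n).eval 1 = 0 := by
  obtain ⟨n, rfl⟩ := Nat.exists_eq_succ_of_ne_zero hn
  rw [legendreAntideriv, eval_mul, eval_iterate_derivative_rodrigues n.lt_succ_self (.inr rfl),
    mul_zero]

theorem natDegree_legendreAntideriv_le (n : ℕ) : (legendreAntideriv n).natDegree ≤ n + 1 := by
  cases n with
  | zero => exact natDegree_X_le
  | succ n =>
    refine (natDegree_C_mul_le _ _).trans ((natDegree_iterate_derivative _ _).trans ?_)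
    rw [natDegree_rodrigues]
    omega

theorem iterate_derivative_legendreAntideriv (n : ℕ) :
    derivative^[n + 1] (legendreAntideriv n) = C (legendreScale n * (2 * n)!) := by
  cases n with
  | zero => simp [legendreAntideriv, legendreScale]
  | succ n =>
    rw [legendreAntideriv, iterate_derivative_C_mul, ← Function.iterate_add_apply,
      show n + 1 + 1 + n = 2 * (n + 1) by ring, iterate_derivative_two_mul_rodrigues, ← C_mul]

theorem integral_shiftedLegendre (n : ℕ) (c : ℝ) :
    ∫ x in (0 : ℝ)..c, shiftedLegendre n x = (legendreAntideriv n).eval c := by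
  have h (x : ℝ) : HasDerivAt (fun y => (legendreAntideriv n).eval y) (shiftedLegendre n x) x := by
    rw [← eval_legendre, ← derivative_legendreAntideriv]
    exact (legendreAntideriv n).hasDerivAt x
  have hcont : Continuous (shiftedLegendre n) :=
    (legendre n).continuous.congr (eval_legendre n)
  rw [integral_eq_sub_of_hasDerivAt (fun x _ => h x) (hcont.intervalIntegrable 0 c),
    eval_legendreAntideriv_zero, sub_zero]

theorem integral_legendreAntideriv_mul_legendre_of_lt {m n : ℕ} (h : m + 1 < n) :
    ∫ x in (0 : ℝ)..1, (legendreAntideriv m).eval x * (legendre n).eval x = 0 :=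
  integral_eval_mul_eval_legendre_of_natDegree_lt
    ((natDegree_legendreAntideriv_le m).trans_lt h)

theorem integral_legendreAntideriv_mul_legendre_antisymm {m : ℕ} (hm : m ≠ 0) (n : ℕ) :
    ∫ x in (0 : ℝ)..1, (legendreAntideriv m).eval x * (legendre n).eval x =
      -∫ x in (0 : ℝ)..1, (legendreAntideriv n).eval x * (legendre m).eval x := by
  rw [← derivative_legendreAntideriv, ← derivative_legendreAntideriv,
    integral_eval_mul_eval_derivative, eval_legendreAntideriv_one hm,
    eval_legendreAntideriv_zero]
  simp only [zero_mul, sub_zero, zero_sub, mul_comm]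

theorem xi_succ (n : ℕ) : xi (n + 1) = 1 / (2 * (√(2 * n + 1) * √(2 * n + 3))) := by
  have hn : (0 : ℝ) ≤ n := n.cast_nonneg
  rw [xi, ← Real.sqrt_mul (by positivity), abs_of_nonneg (by push_cast; nlinarith)]
  push_cast
  ring_nf

theorem integral_legendreAntideriv_mul_legendre_succ (n : ℕ) :
    ∫ x in (0 : ℝ)..1, (legendreAntideriv n).eval x * (legendre (n + 1)).eval x = xi (n + 1) := by
  rw [integral_eval_mul_eval_legendre, iterate_derivative_legendreAntideriv]
  simp only [eval_C, intervalIntegral.integral_const_mul, integral_rodrigues]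
  have hfac : ((2 * (n + 1) + 1)! : ℝ) = (2 * n + 3) * (2 * n + 2) * (2 * n + 1) * (2 * n)! := by
    rw [show 2 * (n + 1) + 1 = 2 * n + 1 + 1 + 1 by ring, factorial_succ, factorial_succ,
      factorial_succ]
    push_cast
    ring
  have hscale : legendreScale (n + 1) = √(2 * n + 3) / ((n + 1) * n !) := by
    rw [legendreScale, factorial_succ]
    push_cast
    ring_nf
  have ha := Real.sq_sqrt (by positivity : (0 : ℝ) ≤ 2 * n + 1)
  have hb := Real.sq_sqrt (by positivity : (0 : ℝ) ≤ 2 * n + 3)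
  rw [xi_succ, hscale, legendreScale, hfac, factorial_succ n]
  push_cast
  field_simp
  rw [ha, hb, ← pow_mul, Even.neg_one_pow ⟨n + 1, by ring⟩]
  ring

theorem stmt5 (i j : ℕ) :
    (∫ c in (0:ℝ)..1, shiftedLegendre j c * ∫ x in (0:ℝ)..c, shiftedLegendre i x) =
      if j = 0 ∧ i = 0 then xi 0
      else if j = i + 1 then xi j
      else if i = j + 1 then -xi (j + 1)
      else 0 := by
  simp_rw [integral_shiftedLegendre, ← eval_legendre, mul_comm ((legendre j).eval _)]
  split_ifs with h₀ h_succ h_pred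
  · obtain ⟨rfl, rfl⟩ := h₀
    norm_num [legendreAntideriv, legendre, legendreScale, rodrigues, xi]
  · subst h_succ
    exact integral_legendreAntideriv_mul_legendre_succ i
  · subst h_pred
    rw [integral_legendreAntideriv_mul_legendre_antisymm j.succ_ne_zero,
      integral_legendreAntideriv_mul_legendre_succ]
  · rcases lt_trichotomy i j with hlt | rfl | hgt
    · exact integral_legendreAntideriv_mul_legendre_of_lt (by omega)
    · have hi : i ≠ 0 := by rintro rfl; exact h₀ ⟨rfl, rfl⟩
      have h := integral_legendreAntideriv_mul_legendre_antisymm hi i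
      linarith
    · rw [integral_legendreAntideriv_mul_legendre_antisymm (by omega),
        integral_legendreAntideriv_mul_legendre_of_lt (by omega), neg_zero]
end

section
/- Assume U and g are real-analytic, let (q, p) : [0,T] → ℝ^m × ℝ^m solve the constrained system with consistent initial data (q₀, p₀) (g(q₀) = 0, ∇g(q₀)ᵀM⁻¹p₀ = 0), ∇g(q₀)ᵀM⁻¹∇g(q₀) nonsingular, and suppose the Lagrange multiplier along the exact solution is constant: λ(q(t), p(t)) = λ̄ for all t ∈ [0,T]. Then there exist h₀ > 0 and r > 0 such that for every h ∈ (0, h₀]: the restriction u := q|[0,h], v := p|[0,h] solves the local problem u̇ = M⁻¹v, v̇ = −∇U(u) − ∇g(u)λ̄ with u(0) = q₀, v(0) = p₀ and satisfies g(u(h)) = 0; and λ̄ is the unique λ₀ ∈ ℝ^ν with ‖λ₀ − λ(q₀,p₀)‖ ≤ r for which the solution of the local problem with parameter λ₀ satisfies g at the endpoint; consequently the one-step approximation is exact: q₁ = q(h) and p₁ = p(h). -/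
open MeasureTheory Matrix Set
open scoped ContDiff

/-! The exact solution has constant multiplier `λ̄`, so it solves the local problem with
parameter `λ̄`; exactness of the step is then uniqueness for that ODE. Let `(u, v)` solve the
local problem with a parameter `λ` close to `λ̄` and satisfy `g (u h) = 0`. A Grönwall estimate,
run while `(u, v)` stays in a fixed tube around `(q, p)`, gives `‖(u, v) - (q, p)‖ = O(h ‖λ - λ̄‖)`
on `[0, h]`. Each component of `g ∘ u` vanishes at `0` and `h` and has zero derivative at `0`, so
Rolle's theorem applied twice gives a `ξ ∈ (0, h)` where its second derivative vanishes, as the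
second derivative of `g ∘ q` does everywhere. That second derivative depends on the multiplier
only through `-G λ`, with `G = ∇gᵀ M⁻¹ ∇g`, so `G (q ξ) (λ̄ - λ) = O(h ‖λ - λ̄‖)`. Since `G q₀` is
invertible and `G (q ξ)` is close to it, `λ = λ̄` once `h` is small. -/

open Filter Topology Metric
open scoped ContDiff NNReal

theorem Prod.mk_mem_cthickening {E W : Type*} [SeminormedAddCommGroup E]
    [SeminormedAddCommGroup W] {S : Set (E × W)} {x y : E} {w w₀ : W} {ρ : ℝ} (hS : (y, w₀) ∈ S)
    (hx : ‖x - y‖ ≤ ρ) (hw : ‖w - w₀‖ ≤ ρ) : (x, w) ∈ cthickening ρ S :=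
  mem_cthickening_of_dist_le _ _ _ _ hS (by simpa [Prod.dist_eq, dist_eq_norm] using ⟨hx, hw⟩)

section Gronwall

variable {E : Type*} [NormedAddCommGroup E] [NormedSpace ℝ E]

theorem gronwallBound_zero_le_mul_exp {K ε : ℝ} (hK : 0 ≤ K) (hε : 0 ≤ ε) (x : ℝ) :
    gronwallBound 0 K ε x ≤ ε * x * Real.exp (K * x) := by
  rcases hK.eq_or_lt with rfl | hK
  · simp [gronwallBound_K0]
  simp only [gronwallBound_of_K_ne_0 hK.ne', zero_mul, zero_add]
  have hexp : Real.exp (K * x) - 1 ≤ K * x * Real.exp (K * x) := by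
    have h := Real.add_one_le_exp (-(K * x))
    calc Real.exp (K * x) - 1 = Real.exp (K * x) * (1 - Real.exp (-(K * x))) := by
          rw [mul_sub, ← Real.exp_add]; simp
      _ ≤ Real.exp (K * x) * (K * x) := by gcongr; linarith
      _ = K * x * Real.exp (K * x) := mul_comm _ _
  calc ε / K * (Real.exp (K * x) - 1) ≤ ε / K * (K * x * Real.exp (K * x)) := by gcongr
    _ = ε * x * Real.exp (K * x) := by field_simp

/-- The bound can never be reached: at the first time `‖f‖ = ρ`, Grönwall's inequality on the
interval before it gives `‖f‖ < ρ`. -/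
theorem norm_le_of_norm_deriv_right_le_while_small {f f' : ℝ → E} {K ε ρ h : ℝ}
    (hK : 0 ≤ K) (hε : 0 ≤ ε) (hf : ContinuousOn f (Icc 0 h))
    (hf' : ∀ t ∈ Ico 0 h, HasDerivWithinAt f (f' t) (Ici t) t) (hf0 : f 0 = 0)
    (bound : ∀ t ∈ Ico 0 h, ‖f t‖ ≤ ρ → ‖f' t‖ ≤ K * ‖f t‖ + ε)
    (hsmall : ε * h * Real.exp (K * h) < ρ) :
    ∀ t ∈ Icc 0 h, ‖f t‖ ≤ ε * h * Real.exp (K * h) := by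
  have key : ∀ s ∈ Icc 0 h, (∀ τ ∈ Ico 0 s, ‖f τ‖ ≤ ρ) →
      ∀ τ ∈ Icc 0 s, ‖f τ‖ ≤ ε * h * Real.exp (K * h) := by
    intro s hs hρ τ hτ
    have hgron := norm_le_gronwallBound_of_norm_deriv_right_le
      (hf.mono (Icc_subset_Icc_right hs.2)) (fun x hx => hf' x ⟨hx.1, hx.2.trans_le hs.2⟩)
      (by simp [hf0] : ‖f 0‖ ≤ 0) (fun x hx => bound x ⟨hx.1, hx.2.trans_le hs.2⟩ (hρ x hx)) τ hτ
    have hτh : τ ≤ h := hτ.2.trans hs.2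
    calc ‖f τ‖ ≤ gronwallBound 0 K ε τ := by simpa using hgron
      _ ≤ ε * τ * Real.exp (K * τ) := gronwallBound_zero_le_mul_exp hK hε τ
      _ ≤ ε * h * Real.exp (K * h) := by have := mul_nonneg hε (hτ.1.trans hτh); gcongr
  have hlt : ∀ t ∈ Icc 0 h, ‖f t‖ < ρ := by
    by_contra! hexit
    obtain ⟨t, ht, hρt⟩ := hexit
    set A := Icc 0 h ∩ (fun t => ‖f t‖) ⁻¹' Ici ρ
    have hA : IsClosed A := (continuous_norm.comp_continuousOn hf).preimage_isClosed_of_isClosed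
      isClosed_Icc isClosed_Ici
    have hbdd : BddBelow A := ⟨0, fun s hs => hs.1.1⟩
    have hfirst := hA.csInf_mem ⟨t, ht, hρt⟩ hbdd
    have hbefore : ∀ τ ∈ Ico 0 (sInf A), ‖f τ‖ ≤ ρ := fun τ hτ =>
      le_of_lt <| not_le.mp fun hρτ =>
        hτ.2.not_ge (csInf_le hbdd ⟨⟨hτ.1, hτ.2.le.trans hfirst.1.2⟩, hρτ⟩)
    have := key _ hfirst.1 hbefore _ ⟨hfirst.1.1, le_rfl⟩
    exact (hfirst.2 : ρ ≤ _).not_gt (this.trans_lt hsmall)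
  intro t ht
  exact key h ⟨ht.1.trans ht.2, le_rfl⟩ (fun τ hτ => (hlt τ (Ico_subset_Icc_self hτ)).le) t ht

variable {W : Type*} [NormedAddCommGroup W]

theorem norm_sub_le_of_hasDerivAt_of_lipschitzOnWith {F : E × W → E} {K : ℝ≥0} {ρ h : ℝ}
    {S : Set (E × W)} (hF : LipschitzOnWith K F (cthickening ρ S)) {z zu : ℝ → E} {w₀ w : W}
    (hz : ∀ t ∈ Icc 0 h, HasDerivAt z (F (z t, w₀)) t)
    (hzu : ∀ t ∈ Icc 0 h, HasDerivAt zu (F (zu t, w)) t)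
    (hS : ∀ t ∈ Icc 0 h, (z t, w₀) ∈ S) (hw : ‖w - w₀‖ ≤ ρ) (h0 : zu 0 = z 0)
    (hsmall : K * h * Real.exp (K * h) * ‖w - w₀‖ < ρ) :
    ∀ t ∈ Icc 0 h, ‖zu t - z t‖ ≤ K * h * Real.exp (K * h) * ‖w - w₀‖ := by
  have hε : K * h * Real.exp (K * h) * ‖w - w₀‖ = K * ‖w - w₀‖ * h * Real.exp (K * h) := by ring
  rw [hε] at hsmall ⊢
  refine norm_le_of_norm_deriv_right_le_while_small (f := fun t => zu t - z t) K.coe_nonneg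
    (by positivity) (fun t ht => ((hzu t ht).sub (hz t ht)).continuousAt.continuousWithinAt)
    (fun t ht => ((hzu t (Ico_subset_Icc_self ht)).sub
      (hz t (Ico_subset_Icc_self ht))).hasDerivWithinAt) (by simp [h0]) ?_ hsmall
  intro t ht hnear
  calc ‖F (zu t, w) - F (z t, w₀)‖ ≤ K * dist (zu t, w) (z t, w₀) := by
        rw [← dist_eq_norm]
        exact hF.dist_le_mul _ (Prod.mk_mem_cthickening (hS t (Ico_subset_Icc_self ht)) hnear hw)
          _ (self_subset_cthickening _ (hS t (Ico_subset_Icc_self ht)))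
    _ ≤ K * (‖zu t - z t‖ + ‖w - w₀‖) := by
        gcongr
        rw [Prod.dist_eq, dist_eq_norm, dist_eq_norm]
        exact max_le_add_of_nonneg (norm_nonneg _) (norm_nonneg _)
    _ = K * ‖zu t - z t‖ + K * ‖w - w₀‖ := by ring

end Gronwall

theorem exists_lipschitzOnWith_cthickening_image {X Y : Type*} [NormedAddCommGroup X]
    [NormedSpace ℝ X] [FiniteDimensional ℝ X] [NormedAddCommGroup Y] [NormedSpace ℝ Y]
    {F : X → Y} (hF : ContDiff ℝ 1 F) {γ : ℝ → X} {a b : ℝ} (hγ : ContinuousOn γ (Icc a b))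
    (ρ : ℝ) : ∃ K, LipschitzOnWith K F (cthickening ρ (γ '' Icc a b)) :=
  hF.locallyLipschitz.locallyLipschitzOn.exists_lipschitzOnWith_of_compact
    (isCompact_Icc.image_of_continuousOn hγ).cthickening

theorem exists_second_deriv_eq_zero {φ φ' φ'' : ℝ → ℝ} {a b : ℝ} (hab : a < b)
    (hφ : ∀ t ∈ Icc a b, HasDerivAt φ (φ' t) t) (hφ' : ∀ t ∈ Icc a b, HasDerivAt φ' (φ'' t) t)
    (hφab : φ a = φ b) (hφ'a : φ' a = 0) : ∃ ξ ∈ Ioo a b, φ'' ξ = 0 := by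
  obtain ⟨c, hc, hφ'c⟩ := exists_hasDerivAt_eq_zero hab
    (fun t ht => (hφ t ht).continuousAt.continuousWithinAt) hφab
    (fun t ht => hφ t (Ioo_subset_Icc_self ht))
  obtain ⟨ξ, hξ, hφ''ξ⟩ := exists_hasDerivAt_eq_zero hc.1
    (fun t ht => (hφ' t ⟨ht.1, ht.2.trans hc.2.le⟩).continuousAt.continuousWithinAt)
    (hφ'a.trans hφ'c.symm) (fun t ht => hφ' t ⟨ht.1.le, ht.2.le.trans hc.2.le⟩)
  exact ⟨ξ, ⟨hξ.1, hξ.2.trans hc.2⟩, hφ''ξ⟩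

theorem HasDerivAt.eq_zero_of_eqOn_zero {F : Type*} [NormedAddCommGroup F] [NormedSpace ℝ F]
    {f : ℝ → F} {f' : F} {s : Set ℝ} {t : ℝ} (hf : HasDerivAt f f' t) (hs : s ∈ 𝓝 t)
    (h0 : EqOn f 0 s) : f' = 0 :=
  hf.unique ((hasDerivAt_const t 0).congr_of_eventuallyEq (eventually_of_mem hs h0))

theorem HasDerivAt.prod_fst {F G : Type*} [NormedAddCommGroup F] [NormedSpace ℝ F]
    [NormedAddCommGroup G] [NormedSpace ℝ G] {f : ℝ → F × G} {f' : F × G} {t : ℝ}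
    (hf : HasDerivAt f f' t) : HasDerivAt (fun s => (f s).1) f'.1 t :=
  (hasFDerivAt_fst.comp_hasDerivAt t hf :)

theorem HasDerivAt.prod_snd {F G : Type*} [NormedAddCommGroup F] [NormedSpace ℝ F]
    [NormedAddCommGroup G] [NormedSpace ℝ G] {f : ℝ → F × G} {f' : F × G} {t : ℝ}
    (hf : HasDerivAt f f' t) : HasDerivAt (fun s => (f s).2) f'.2 t :=
  (hasFDerivAt_snd.comp_hasDerivAt t hf :)

theorem eventually_nhdsGT_forall_Icc {P : ℝ → Prop} {a : ℝ} (hP : ∀ᶠ t in 𝓝 a, P t) :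
    ∀ᶠ b in 𝓝[>] a, ∀ t ∈ Icc a b, P t := by
  obtain ⟨ε, hε, hball⟩ := Metric.eventually_nhds_iff.mp hP
  filter_upwards [Ioo_mem_nhdsGT (lt_add_of_pos_right a hε)] with b hb t ht
  exact hball (by rw [Real.dist_eq, abs_of_nonneg (sub_nonneg.mpr ht.1)]; linarith [ht.2, hb.2])

section MatrixNorm

open scoped Matrix.Norms.Operator

variable {n : Type*} [Fintype n] [DecidableEq n]

theorem norm_le_norm_inv_mul_norm_mulVec {A : Matrix n n ℝ} (hA : IsUnit A) (w : n → ℝ) :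
    ‖w‖ ≤ ‖A⁻¹‖ * ‖A *ᵥ w‖ := by
  calc ‖w‖ = ‖A⁻¹ *ᵥ (A *ᵥ w)‖ := by
        rw [mulVec_mulVec, nonsing_inv_mul _ ((isUnit_iff_isUnit_det A).mp hA), one_mulVec]
    _ ≤ ‖A⁻¹‖ * ‖A *ᵥ w‖ := linfty_opNorm_mulVec _ _

theorem eq_zero_of_forall_exists_abs_mulVec_le {A : Matrix n n ℝ} (hA : IsUnit A) {w : n → ℝ}
    {η β : ℝ} (hη : 0 ≤ η) (hβ : 0 ≤ β) (hηβ : ‖A⁻¹‖ * (η + β) < 1)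
    (h : ∀ a, ∃ B : Matrix n n ℝ, ‖B - A‖ ≤ η ∧ |(B *ᵥ w) a| ≤ β * ‖w‖) : w = 0 := by
  have hAw : ‖A *ᵥ w‖ ≤ (η + β) * ‖w‖ := by
    refine (pi_norm_le_iff_of_nonneg (by positivity)).mpr fun a => ?_
    obtain ⟨B, hBA, hBw⟩ := h a
    have hsplit : (A *ᵥ w) a = ((A - B) *ᵥ w) a + (B *ᵥ w) a := by simp [sub_mulVec]
    have hAB : |((A - B) *ᵥ w) a| ≤ η * ‖w‖ :=
      (norm_le_pi_norm ((A - B) *ᵥ w) a).trans <| (linfty_opNorm_mulVec _ _).trans <| by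
        rw [norm_sub_rev]; gcongr
    rw [hsplit, Real.norm_eq_abs]
    linarith [abs_add_le (((A - B) *ᵥ w) a) ((B *ᵥ w) a)]
  have := (norm_le_norm_inv_mul_norm_mulVec hA w).trans
    (mul_le_mul_of_nonneg_left hAw (norm_nonneg _))
  exact norm_le_zero_iff.mp (by nlinarith [norm_nonneg w])

end MatrixNorm

section ConstrainedDynamics

variable {m ν : ℕ} (M : Matrix (Fin m) (Fin m) ℝ) (U : (Fin m → ℝ) → ℝ)
  (g : (Fin m → ℝ) → (Fin ν → ℝ))

noncomputable def localField (z : ((Fin m → ℝ) × (Fin m → ℝ)) × (Fin ν → ℝ)) :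
    (Fin m → ℝ) × (Fin m → ℝ) :=
  (M⁻¹ *ᵥ z.1.2, -(grad U z.1.1 + gradMat g z.1.1 *ᵥ z.2))

noncomputable def constraintVel (z : (Fin m → ℝ) × (Fin m → ℝ)) : Fin ν → ℝ :=
  fun a => fderiv ℝ (fun x => g x a) z.1 (M⁻¹ *ᵥ z.2)

noncomputable def constraintAccel (z : ((Fin m → ℝ) × (Fin m → ℝ)) × (Fin ν → ℝ)) :
    Fin ν → ℝ :=
  fun a => fderiv ℝ (fderiv ℝ (fun x => g x a)) z.1.1 (M⁻¹ *ᵥ z.1.2) (M⁻¹ *ᵥ z.1.2)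
    + fderiv ℝ (fun x => g x a) z.1.1 (M⁻¹ *ᵥ (localField M U g z).2)

noncomputable def constraintGram (x : Fin m → ℝ) : Matrix (Fin ν) (Fin ν) ℝ :=
  (gradMat g x)ᵀ * M⁻¹ * gradMat g x

variable {M U g}

theorem gradMat_transpose_mulVec_apply (x w : Fin m → ℝ) (a : Fin ν) :
    ((gradMat g x)ᵀ *ᵥ w) a = fderiv ℝ (fun y => g y a) x w := by
  conv_rhs => rw [pi_eq_sum_univ' w]
  simp [Matrix.mulVec, dotProduct, gradMat, mul_comm]

theorem constraintVel_eq_gradMat_mulVec (z : (Fin m → ℝ) × (Fin m → ℝ)) :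
    constraintVel M g z = (gradMat g z.1)ᵀ *ᵥ (M⁻¹ *ᵥ z.2) :=
  funext fun a => (gradMat_transpose_mulVec_apply _ _ a).symm

theorem constraintAccel_sub (z : (Fin m → ℝ) × (Fin m → ℝ)) (μ₁ μ₂ : Fin ν → ℝ) :
    constraintAccel M U g (z, μ₁) - constraintAccel M U g (z, μ₂)
      = constraintGram M g z.1 *ᵥ (μ₂ - μ₁) := by
  funext a
  simp only [Pi.sub_apply, constraintAccel, localField, constraintGram, ← mulVec_mulVec,
    gradMat_transpose_mulVec_apply, add_sub_add_left_eq_sub, ← map_sub, ← mulVec_sub]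
  congr 2
  rw [mulVec_sub]
  abel

theorem contDiff_fderiv_component (hg : ContDiff ℝ ∞ g) (a : Fin ν) :
    ContDiff ℝ ∞ (fderiv ℝ (fun x => g x a)) :=
  (contDiff_pi.mp hg a).fderiv_right le_rfl

theorem contDiff_localField (hU : ContDiff ℝ ∞ U) (hg : ContDiff ℝ ∞ g) :
    ContDiff ℝ ∞ (localField M U g) := by
  have hgrad : ContDiff ℝ ∞ (grad U) :=
    contDiff_pi.mpr fun i => (hU.fderiv_right le_rfl).clm_apply contDiff_const
  have hgradMat : ContDiff ℝ ∞ (fun z : (Fin m → ℝ) × (Fin ν → ℝ) => gradMat g z.1 *ᵥ z.2) := by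
    have := contDiff_fderiv_component hg
    refine contDiff_pi.mpr fun i => ?_
    simp only [Matrix.mulVec, dotProduct, gradMat, Matrix.of_apply]
    fun_prop
  have hM : ContDiff ℝ ∞ (fun y : Fin m → ℝ => M⁻¹ *ᵥ y) :=
    (Matrix.mulVecLin M⁻¹).toContinuousLinearMap.contDiff
  exact (hM.comp (contDiff_snd.comp contDiff_fst)).prodMk ((hgrad.comp
    (contDiff_fst.comp contDiff_fst)).add (hgradMat.comp
      ((contDiff_fst.comp contDiff_fst).prodMk contDiff_snd))).neg

theorem contDiff_constraintAccel (hU : ContDiff ℝ ∞ U) (hg : ContDiff ℝ ∞ g) :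
    ContDiff ℝ ∞ (constraintAccel M U g) := by
  have hM : ContDiff ℝ ∞ (fun y : Fin m → ℝ => M⁻¹ *ᵥ y) :=
    (Matrix.mulVecLin M⁻¹).toContinuousLinearMap.contDiff
  have hx : ContDiff ℝ ∞ (fun z : ((Fin m → ℝ) × (Fin m → ℝ)) × (Fin ν → ℝ) => z.1.1) := by
    fun_prop
  have hv : ContDiff ℝ ∞ (fun z : ((Fin m → ℝ) × (Fin m → ℝ)) × (Fin ν → ℝ) => M⁻¹ *ᵥ z.1.2) :=
    hM.comp (by fun_prop)
  refine contDiff_pi.mpr fun a => ?_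
  have hB := (contDiff_fderiv_component hg a).comp hx
  have hB2 := ((contDiff_fderiv_component hg a).fderiv_right le_rfl).comp hx
  exact ((hB2.clm_apply hv).clm_apply hv).add
    (hB.clm_apply (hM.comp (contDiff_localField hU hg).snd))

theorem continuous_constraintGram (hg : ContDiff ℝ ∞ g) : Continuous (constraintGram M g) := by
  have hgradMat : Continuous (gradMat g) := continuous_matrix fun i a =>
    (contDiff_fderiv_component hg a).continuous.clm_apply continuous_const
  exact (hgradMat.matrix_transpose.matrix_mul continuous_const).matrix_mul hgradMat

theorem hasDerivAt_constraint_comp (hg : Differentiable ℝ g)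
    {z : ℝ → (Fin m → ℝ) × (Fin m → ℝ)} {lam : Fin ν → ℝ} {t : ℝ}
    (hz : HasDerivAt z (localField M U g (z t, lam)) t) (a : Fin ν) :
    HasDerivAt (fun s => g (z s).1 a) (constraintVel M g (z t) a) t :=
  ((differentiable_pi.mp hg a).differentiableAt.hasFDerivAt).comp_hasDerivAt t hz.prod_fst

theorem hasDerivAt_constraintVel (hg : ContDiff ℝ ∞ g)
    {z : ℝ → (Fin m → ℝ) × (Fin m → ℝ)} {lam : Fin ν → ℝ} {t : ℝ}
    (hz : HasDerivAt z (localField M U g (z t, lam)) t) (a : Fin ν) :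
    HasDerivAt (fun s => constraintVel M g (z s) a) (constraintAccel M U g (z t, lam) a) t := by
  have hB := ((contDiff_fderiv_component hg a).differentiable (by simp)).differentiableAt
    |>.hasFDerivAt.comp_hasDerivAt t hz.prod_fst
  have hv := (Matrix.mulVecLin M⁻¹).toContinuousLinearMap.hasFDerivAt.comp_hasDerivAt t
    hz.prod_snd
  exact hB.clm_apply hv

theorem constraintAccel_eq_zero_of_constraint (hg : ContDiff ℝ ∞ g)
    {z : ℝ → (Fin m → ℝ) × (Fin m → ℝ)} {lam : Fin ν → ℝ} {s : Set ℝ} (hs : IsOpen s)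
    (hz : ∀ t ∈ s, HasDerivAt z (localField M U g (z t, lam)) t)
    (hcon : ∀ t ∈ s, g (z t).1 = 0) {t : ℝ} (ht : t ∈ s) :
    constraintAccel M U g (z t, lam) = 0 := by
  have hvel : ∀ τ ∈ s, constraintVel M g (z τ) = 0 := fun τ hτ => funext fun a =>
    (hasDerivAt_constraint_comp (hg.differentiable (by simp)) (hz τ hτ) a).eq_zero_of_eqOn_zero
      (hs.mem_nhds hτ) fun x hx => by simp [hcon x hx]
  exact funext fun a => (hasDerivAt_constraintVel hg (hz t ht) a).eq_zero_of_eqOn_zero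
    (hs.mem_nhds ht) fun x hx => congrFun (hvel x hx) a

theorem exists_constraintAccel_eq_zero (hg : ContDiff ℝ ∞ g)
    {z : ℝ → (Fin m → ℝ) × (Fin m → ℝ)} {lam : Fin ν → ℝ} {h : ℝ} (hh : 0 < h)
    (hz : ∀ t ∈ Icc 0 h, HasDerivAt z (localField M U g (z t, lam)) t)
    (hg0 : g (z 0).1 = 0) (hgh : g (z h).1 = 0) (hvel : constraintVel M g (z 0) = 0)
    (a : Fin ν) : ∃ ξ ∈ Ioo 0 h, constraintAccel M U g (z ξ, lam) a = 0 :=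
  exists_second_deriv_eq_zero hh
    (fun t ht => hasDerivAt_constraint_comp (hg.differentiable (by simp)) (hz t ht) a)
    (fun t ht => hasDerivAt_constraintVel hg (hz t ht) a) (by simp [hg0, hgh]) (congrFun hvel a)

theorem exists_abs_constraintGram_mulVec_apply_le (hg : ContDiff ℝ ∞ g)
    {S : Set (((Fin m → ℝ) × (Fin m → ℝ)) × (Fin ν → ℝ))} {K : ℝ≥0} {ρ : ℝ}
    (hK : LipschitzOnWith K (constraintAccel M U g) (cthickening ρ S))
    {z zu : ℝ → (Fin m → ℝ) × (Fin m → ℝ)} {lb lam : Fin ν → ℝ} {h : ℝ} (hh : 0 < h)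
    (hz : ∀ t ∈ Icc 0 h, HasDerivAt z (localField M U g (z t, lb)) t)
    (hcon : ∀ t ∈ Icc 0 h, g (z t).1 = 0) (hvel : constraintVel M g (z 0) = 0)
    (hzu : ∀ t ∈ Icc 0 h, HasDerivAt zu (localField M U g (zu t, lam)) t) (h0 : zu 0 = z 0)
    (hgh : g (zu h).1 = 0) (hS : ∀ t ∈ Icc 0 h, (z t, lb) ∈ S) (hlam : ‖lam - lb‖ ≤ ρ)
    (hnear : ∀ t ∈ Icc 0 h, ‖zu t - z t‖ ≤ ρ) (a : Fin ν) :
    ∃ ξ ∈ Ioo 0 h, |(constraintGram M g (z ξ).1 *ᵥ (lb - lam)) a| ≤ K * ‖z ξ - zu ξ‖ := by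
  obtain ⟨ξ, hξ, hξ0⟩ := exists_constraintAccel_eq_zero hg hh hzu
    (h0 ▸ hcon 0 ⟨le_rfl, hh.le⟩) hgh (h0 ▸ hvel) a
  have hx0 : constraintAccel M U g (z ξ, lb) = 0 :=
    constraintAccel_eq_zero_of_constraint hg isOpen_Ioo
      (fun t ht => hz t (Ioo_subset_Icc_self ht)) (fun t ht => hcon t (Ioo_subset_Icc_self ht)) hξ
  have hdiff : (constraintGram M g (z ξ).1 *ᵥ (lb - lam)) a
      = (constraintAccel M U g (z ξ, lam) - constraintAccel M U g (zu ξ, lam)) a := by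
    rw [← constraintAccel_sub, hx0, sub_zero, Pi.sub_apply, hξ0, sub_zero]
  have hξ' := Ioo_subset_Icc_self hξ
  refine ⟨ξ, hξ, ?_⟩
  rw [hdiff, ← Real.norm_eq_abs]
  calc _ ≤ ‖constraintAccel M U g (z ξ, lam) - constraintAccel M U g (zu ξ, lam)‖ :=
        norm_le_pi_norm _ a
    _ ≤ K * dist (z ξ, lam) (zu ξ, lam) := by
        rw [← dist_eq_norm]
        exact hK.dist_le_mul _ (Prod.mk_mem_cthickening (hS ξ hξ')
          (by simpa using (norm_nonneg _).trans hlam) hlam)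
          _ (Prod.mk_mem_cthickening (hS ξ hξ') (hnear ξ hξ') hlam)
    _ = K * ‖z ξ - zu ξ‖ := by simp [dist_eq_norm]

theorem eqOn_of_hasDerivAt_localField (hU : ContDiff ℝ ∞ U) (hg : ContDiff ℝ ∞ g)
    {z zu : ℝ → (Fin m → ℝ) × (Fin m → ℝ)} {lam : Fin ν → ℝ} {h : ℝ}
    (hz : ∀ t ∈ Icc 0 h, HasDerivAt z (localField M U g (z t, lam)) t)
    (hzu : ∀ t ∈ Icc 0 h, HasDerivAt zu (localField M U g (zu t, lam)) t) (h0 : zu 0 = z 0) :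
    EqOn zu z (Icc 0 h) := by
  obtain ⟨K, hK⟩ := exists_lipschitzOnWith_cthickening_image
    ((contDiff_localField hU hg).of_le (by simp)) (γ := fun t => (z t, lam))
    (fun t ht => ((hz t ht).continuousAt.prodMk continuousAt_const).continuousWithinAt) 1
  intro t ht
  simpa [sub_eq_zero] using norm_sub_le_of_hasDerivAt_of_lipschitzOnWith hK hz hzu
    (fun t ht => mem_image_of_mem _ ht) (by simp) h0 (by simp) t ht

open scoped Matrix.Norms.Operator in
theorem eventually_multiplier_eq (hU : ContDiff ℝ ∞ U) (hg : ContDiff ℝ ∞ g)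
    {z : ℝ → (Fin m → ℝ) × (Fin m → ℝ)} {lb : Fin ν → ℝ} {T : ℝ} (hT : 0 < T)
    (hz : ∀ t ∈ Icc 0 T, HasDerivAt z (localField M U g (z t, lb)) t)
    (hcon : ∀ t ∈ Icc 0 T, g (z t).1 = 0) (hvel : constraintVel M g (z 0) = 0)
    (hns : IsUnit (constraintGram M g (z 0).1)) :
    ∀ᶠ h in 𝓝[>] 0, ∀ lam : Fin ν → ℝ, ‖lam - lb‖ ≤ 1 →
      ∀ zu : ℝ → (Fin m → ℝ) × (Fin m → ℝ), zu 0 = z 0 →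
      (∀ t ∈ Icc 0 h, HasDerivAt zu (localField M U g (zu t, lam)) t) → g (zu h).1 = 0 →
      lam = lb := by
  set A₀ := constraintGram M g (z 0).1
  set η : ℝ := 1 / (‖A₀⁻¹‖ + 1)
  have hη : 0 < η := by positivity
  have hη₁ : ‖A₀⁻¹‖ * η < 1 := by
    rw [mul_one_div]; exact (div_lt_one (by positivity)).mpr (lt_add_one _)
  have hγ : ContinuousOn (fun t => (z t, lb)) (Icc 0 T) := fun t ht =>
    ((hz t ht).continuousAt.prodMk continuousAt_const).continuousWithinAt
  obtain ⟨K₁, hK₁⟩ := exists_lipschitzOnWith_cthickening_image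
    ((contDiff_localField hU hg).of_le (by simp)) hγ 1
  obtain ⟨K₂, hK₂⟩ := exists_lipschitzOnWith_cthickening_image
    ((contDiff_constraintAccel (M := M) hU hg).of_le (by simp)) hγ 1
  have hgram : ∀ᶠ h in 𝓝[>] 0, ∀ ξ ∈ Icc 0 h, dist (constraintGram M g (z ξ).1) A₀ < η :=
    eventually_nhdsGT_forall_Icc <| tendsto_nhds.mp
      ((continuous_constraintGram hg).continuousAt.comp
        (hz 0 ⟨le_rfl, hT.le⟩).prod_fst.continuousAt) η hη
  have hφ : Tendsto (fun h => K₁ * h * Real.exp (K₁ * h)) (𝓝[>] 0) (𝓝 0) := by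
    have : Continuous fun h : ℝ => K₁ * h * Real.exp (K₁ * h) := by fun_prop
    simpa using (this.tendsto 0).mono_left nhdsWithin_le_nhds
  have hcontr := ((hφ.const_mul (K₂ : ℝ)).const_add η).const_mul ‖A₀⁻¹‖
  rw [mul_zero, add_zero] at hcontr
  filter_upwards [hgram, hφ.eventually (gt_mem_nhds one_pos), hcontr.eventually (gt_mem_nhds hη₁),
    Ioc_mem_nhdsGT hT] with h hgram_h hφ₁ hφ₂ hhT lam hlam zu hzu0 hzu hgu
  set φ := K₁ * h * Real.exp (K₁ * h)
  have hφ0 : 0 ≤ φ := by have := hhT.1.le; positivity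
  have hsub : Icc 0 h ⊆ Icc 0 T := Icc_subset_Icc_right hhT.2
  have hS : ∀ t ∈ Icc 0 h, (z t, lb) ∈ (fun t => (z t, lb)) '' Icc 0 T := fun t ht =>
    mem_image_of_mem _ (hsub ht)
  have hclose : ∀ t ∈ Icc 0 h, ‖zu t - z t‖ ≤ φ * ‖lam - lb‖ :=
    norm_sub_le_of_hasDerivAt_of_lipschitzOnWith hK₁ (fun t ht => hz t (hsub ht)) hzu hS hlam hzu0
      ((mul_le_of_le_one_right hφ0 hlam).trans_lt hφ₁)
  refine (sub_eq_zero.mp (eq_zero_of_forall_exists_abs_mulVec_le hns hη.le (β := K₂ * φ)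
    (by positivity) hφ₂ fun a => ?_)).symm
  obtain ⟨ξ, hξ, hbound⟩ := exists_abs_constraintGram_mulVec_apply_le hg hK₂ hhT.1
    (fun t ht => hz t (hsub ht)) (fun t ht => hcon t (hsub ht)) hvel hzu hzu0 hgu hS hlam
    (fun t ht => (hclose t ht).trans (mul_le_one₀ hφ₁.le (norm_nonneg _) hlam)) a
  refine ⟨_, (dist_eq_norm _ _).symm.trans_le (hgram_h ξ (Ioo_subset_Icc_self hξ)).le,
    hbound.trans ?_⟩
  rw [norm_sub_rev, norm_sub_rev lb, mul_assoc]
  gcongr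
  exact hclose ξ (Ioo_subset_Icc_self hξ)

end ConstrainedDynamics
theorem stmt11_general {m ν : ℕ}
    (M : Matrix (Fin m) (Fin m) ℝ)
    (U : (Fin m → ℝ) → ℝ) (hU : ∀ x, AnalyticAt ℝ U x)
    (g : (Fin m → ℝ) → (Fin ν → ℝ)) (hg : ∀ x, AnalyticAt ℝ g x)
    (T : ℝ) (hT : 0 < T)
    (q₀ p₀ : Fin m → ℝ)
    (hh0 : (gradMat g q₀)ᵀ *ᵥ (M⁻¹ *ᵥ p₀) = 0)
    (hns : IsUnit ((gradMat g q₀)ᵀ * M⁻¹ * gradMat g q₀))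
    (q p : ℝ → Fin m → ℝ) (hq0 : q 0 = q₀) (hp0 : p 0 = p₀)
    (hq : ∀ t ∈ Set.Icc (0:ℝ) T, HasDerivAt q (M⁻¹ *ᵥ p t) t)
    (hp : ∀ t ∈ Set.Icc (0:ℝ) T,
      HasDerivAt p (-(grad U (q t) + gradMat g (q t) *ᵥ lagMult M U g (q t) (p t))) t)
    (hcon : ∀ t ∈ Set.Icc (0:ℝ) T, g (q t) = 0)
    (lb : Fin ν → ℝ)
    (hconst : ∀ t ∈ Set.Icc (0:ℝ) T, lagMult M U g (q t) (p t) = lb) :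
    ∃ h₀ > 0, h₀ ≤ T ∧ ∃ r > 0, ∀ h ∈ Set.Ioc (0:ℝ) h₀,
      (∀ t ∈ Set.Icc (0:ℝ) h,
        HasDerivAt q (M⁻¹ *ᵥ p t) t ∧
        HasDerivAt p (-(grad U (q t) + gradMat g (q t) *ᵥ lb)) t) ∧
      g (q h) = 0 ∧
      (∀ lam : Fin ν → ℝ, ‖lam - lagMult M U g q₀ p₀‖ ≤ r →
        (∃ u v : ℝ → Fin m → ℝ, u 0 = q₀ ∧ v 0 = p₀ ∧
          (∀ t ∈ Set.Icc (0:ℝ) h, HasDerivAt u (M⁻¹ *ᵥ v t) t ∧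
            HasDerivAt v (-(grad U (u t) + gradMat g (u t) *ᵥ lam)) t) ∧
          g (u h) = 0) →
        lam = lb) ∧
      (∀ u v : ℝ → Fin m → ℝ, u 0 = q₀ → v 0 = p₀ →
        (∀ t ∈ Set.Icc (0:ℝ) h, HasDerivAt u (M⁻¹ *ᵥ v t) t ∧
          HasDerivAt v (-(grad U (u t) + gradMat g (u t) *ᵥ lb)) t) →
        u h = q h ∧ v h = p h) := by
  have cU : ContDiff ℝ ∞ U := contDiff_iff_contDiffAt.mpr fun x => (hU x).contDiffAt
  have cg : ContDiff ℝ ∞ g := contDiff_iff_contDiffAt.mpr fun x => (hg x).contDiffAt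
  have hp' : ∀ t ∈ Icc 0 T, HasDerivAt p (-(grad U (q t) + gradMat g (q t) *ᵥ lb)) t :=
    fun t ht => hconst t ht ▸ hp t ht
  have hz : ∀ t ∈ Icc 0 T,
      HasDerivAt (fun s => (q s, p s)) (localField M U g ((q t, p t), lb)) t :=
    fun t ht => (hq t ht).prodMk (hp' t ht)
  have hlb : lagMult M U g q₀ p₀ = lb := by simpa [hq0, hp0] using hconst 0 ⟨le_rfl, hT.le⟩
  obtain ⟨h₁, hh₁, hunique⟩ := mem_nhdsGT_iff_exists_Ioc_subset.mp
    (eventually_multiplier_eq cU cg hT hz hcon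
      (by simpa [constraintVel_eq_gradMat_mulVec, hq0, hp0] using hh0)
      (by simpa [constraintGram, hq0] using hns))
  refine ⟨min h₁ T, lt_min hh₁ hT, min_le_right _ _, 1, one_pos, fun h hh => ?_⟩
  have hsub : Icc 0 h ⊆ Icc 0 T := Icc_subset_Icc_right (hh.2.trans (min_le_right _ _))
  refine ⟨fun t ht => ⟨hq t (hsub ht), hp' t (hsub ht)⟩, hcon h (hsub ⟨hh.1.le, le_rfl⟩), ?_, ?_⟩
  · rintro lam hlam ⟨u, v, hu0, hv0, huv, hgu⟩
    exact hunique ⟨hh.1, hh.2.trans (min_le_left _ _)⟩ lam (hlb ▸ hlam) (fun t => (u t, v t))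
      (by simp [hu0, hv0, hq0, hp0]) (fun t ht => (huv t ht).1.prodMk (huv t ht).2) hgu
  · intro u v hu0 hv0 huv
    exact Prod.ext_iff.mp (eqOn_of_hasDerivAt_localField cU cg (fun t ht => hz t (hsub ht))
      (fun t ht => (huv t ht).1.prodMk (huv t ht).2) (by simp [hu0, hv0, hq0, hp0])
      ⟨hh.1.le, le_rfl⟩)

theorem stmt11 {m ν : ℕ} (hmn : ν < m)
    (M : Matrix (Fin m) (Fin m) ℝ) (hM : M.PosDef)
    (U : (Fin m → ℝ) → ℝ) (hU : ∀ x, AnalyticAt ℝ U x)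
    (g : (Fin m → ℝ) → (Fin ν → ℝ)) (hg : ∀ x, AnalyticAt ℝ g x)
    (T : ℝ) (hT : 0 < T)
    (q₀ p₀ : Fin m → ℝ)
    (hg0 : g q₀ = 0)
    (hh0 : (gradMat g q₀)ᵀ *ᵥ (M⁻¹ *ᵥ p₀) = 0)
    (hns : IsUnit ((gradMat g q₀)ᵀ * M⁻¹ * gradMat g q₀))
    (q p : ℝ → Fin m → ℝ) (hq0 : q 0 = q₀) (hp0 : p 0 = p₀)
    (hq : ∀ t ∈ Set.Icc (0:ℝ) T, HasDerivAt q (M⁻¹ *ᵥ p t) t)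
    (hp : ∀ t ∈ Set.Icc (0:ℝ) T,
      HasDerivAt p (-(grad U (q t) + gradMat g (q t) *ᵥ lagMult M U g (q t) (p t))) t)
    (hcon : ∀ t ∈ Set.Icc (0:ℝ) T, g (q t) = 0)
    (lb : Fin ν → ℝ)
    (hconst : ∀ t ∈ Set.Icc (0:ℝ) T, lagMult M U g (q t) (p t) = lb) :
    ∃ h₀ > 0, h₀ ≤ T ∧ ∃ r > 0, ∀ h ∈ Set.Ioc (0:ℝ) h₀,
      (∀ t ∈ Set.Icc (0:ℝ) h,
        HasDerivAt q (M⁻¹ *ᵥ p t) t ∧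
        HasDerivAt p (-(grad U (q t) + gradMat g (q t) *ᵥ lb)) t) ∧
      g (q h) = 0 ∧
      (∀ lam : Fin ν → ℝ, ‖lam - lagMult M U g q₀ p₀‖ ≤ r →
        (∃ u v : ℝ → Fin m → ℝ, u 0 = q₀ ∧ v 0 = p₀ ∧
          (∀ t ∈ Set.Icc (0:ℝ) h, HasDerivAt u (M⁻¹ *ᵥ v t) t ∧
            HasDerivAt v (-(grad U (u t) + gradMat g (u t) *ᵥ lam)) t) ∧
          g (u h) = 0) →
        lam = lb) ∧
      (∀ u v : ℝ → Fin m → ℝ, u 0 = q₀ → v 0 = p₀ →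
        (∀ t ∈ Set.Icc (0:ℝ) h, HasDerivAt u (M⁻¹ *ᵥ v t) t ∧
          HasDerivAt v (-(grad U (u t) + gradMat g (u t) *ᵥ lb)) t) →
        u h = q h ∧ v h = p h) :=
  stmt11_general M U hU g hg T hT q₀ p₀ hh0 hns q p hq0 hp0 hq hp hcon lb hconst
end
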